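/- arXiv:2011.03159 — 2 statements merged into one kernel-verified Lean document; each statement's English description precedes it below -/
import Mathlib

section
/- Suppose (α_k) and (β_k) are quaternionic sequences with Σ k·k!|α_k|² < ∞ and Σ (k+1)!|β_k|² < ∞. Then Σ_{k=0}^∞ (k+1)! \overline{α_{k+1}} β_k is absolutely convergent, and it equals both the Fock inner product ⟨(∂̄/2)f, g⟩ and ⟨f, S(g)⟩, where f = Σ Q_k α_k, g = Σ Q_k β_k. Hence the creation operator S is the adjoint of the annihilation operator ∂̄/2 on the Clifford-Appell Fock space. -/
open Quaternion

/-- For quaternionic sequences with `Σ k·k!|α_k|² < ∞` and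
`Σ (k+1)!|β_k|² < ∞`, the series `Σ (k+1)! conj(α_{k+1}) β_k` is absolutely
convergent and equals both `⟨(∂̄/2)f, g⟩ = Σ k! conj((k+1)α_{k+1}) β_k` and
`⟨f, S g⟩ = Σ_{k≥1} k! conj(α_k) β_{k-1}`: the creation operator `S` is the
adjoint of the annihilation operator `∂̄/2` on the Clifford-Appell Fock space. -/
theorem stmt_14 (α β : ℕ → ℍ[ℝ])
    (hα : Summable fun k : ℕ => (k : ℝ) * (k.factorial : ℝ) * ‖α k‖ ^ 2)
    (hβ : Summable fun k : ℕ => ((k + 1).factorial : ℝ) * ‖β k‖ ^ 2) :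
    (Summable fun k : ℕ => ((k + 1).factorial : ℝ) * (‖α (k + 1)‖ * ‖β k‖)) ∧
    (∑' k : ℕ, ((k + 1).factorial : ℝ) • (star (α (k + 1)) * β k)
      = ∑' k : ℕ, (k.factorial : ℝ) • (star (((k : ℝ) + 1) • α (k + 1)) * β k)) ∧
    (∑' k : ℕ, ((k + 1).factorial : ℝ) • (star (α (k + 1)) * β k)
      = ∑' k : ℕ, (k.factorial : ℝ) •
          (if k = 0 then (0 : ℍ[ℝ]) else star (α k) * β (k - 1))) := by
  -- dominating summable series
  have hα' : Summable fun k : ℕ =>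
      ((k : ℝ) + 1) * ((k + 1).factorial : ℝ) * ‖α (k + 1)‖ ^ 2 := by
    have := (summable_nat_add_iff (f := fun k : ℕ =>
      (k : ℝ) * (k.factorial : ℝ) * ‖α k‖ ^ 2) 1).mpr hα
    simpa [Nat.cast_add, Nat.cast_one] using this
  have hdom : Summable fun k : ℕ =>
      (((k : ℝ) + 1) * ((k + 1).factorial : ℝ) * ‖α (k + 1)‖ ^ 2
        + ((k + 1).factorial : ℝ) * ‖β k‖ ^ 2) / 2 := by
    exact (hα'.add hβ).div_const 2
  have hsum : Summable fun k : ℕ =>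
      ((k + 1).factorial : ℝ) * (‖α (k + 1)‖ * ‖β k‖) := by
    refine Summable.of_nonneg_of_le (fun k => by positivity) (fun k => ?_) hdom
    have ha := norm_nonneg (α (k + 1))
    have hb := norm_nonneg (β k)
    have hc : (0 : ℝ) ≤ ((k + 1).factorial : ℝ) := Nat.cast_nonneg _
    have hk : (0 : ℝ) ≤ (k : ℝ) := Nat.cast_nonneg _
    nlinarith [sq_nonneg (‖α (k + 1)‖ - ‖β k‖), mul_nonneg hc (sq_nonneg (‖α (k+1)‖)),
      mul_nonneg (mul_nonneg hk hc) (sq_nonneg (‖α (k+1)‖))]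
  refine ⟨hsum, ?_, ?_⟩
  · refine tsum_congr fun k => ?_
    rw [Quaternion.star_smul, smul_mul_assoc, smul_smul]
    congr 1
    push_cast [Nat.factorial_succ]
    ring
  · -- reindexing
    have hfsum : Summable fun k : ℕ =>
        ((k + 1).factorial : ℝ) • (star (α (k + 1)) * β k) := by
      refine Summable.of_norm (Summable.of_nonneg_of_le (fun k => norm_nonneg _)
        (fun k => ?_) hsum)
      rw [norm_smul, norm_mul, Quaternion.norm_star]
      simp [abs_of_nonneg (Nat.cast_nonneg ((k+1).factorial) : (0:ℝ) ≤ _)]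
    set g : ℕ → ℍ[ℝ] := fun k => (k.factorial : ℝ) •
        (if k = 0 then (0 : ℍ[ℝ]) else star (α k) * β (k - 1)) with hg
    have hgshift : ∀ k : ℕ, g (k + 1)
        = ((k + 1).factorial : ℝ) • (star (α (k + 1)) * β k) := by
      intro k; simp [hg]
    have hgsum : Summable g := by
      rw [← summable_nat_add_iff 1]
      simpa [hgshift] using hfsum
    have h0 : g 0 = 0 := by simp [hg]
    rw [Summable.tsum_eq_zero_add hgsum, h0, zero_add]
    exact (tsum_congr hgshift).symm
end

section
/- Let c : ℕ → ℝ be non-decreasing with c_0 = 1, and let (a_k) be quaternionic coefficients with Σ_{k=0}^∞ c_k|a_k|² < ∞ (so f = Σ q^k a_k lies in HS_c). Define α_k := −2(k+1)(k+2) a_{k+2} and b_k := c_{k+2}/((k+1)²(k+2)²). Then Σ_{k=0}^∞ b_k|α_k|² = 4(Σ_{k=0}^∞ c_k|a_k|² − |a_0|² − c_1|a_1|²). In particular, ‖τ(f)‖_{HM_b} = 2√(‖f‖²_{HS_c} − |f(0)|² − c_1|f'(0)|²), where τ is the Fueter mapping satisfying τ(q^k) = −2(k−1)k Q_{k−2}.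 -/
open Quaternion

/-- Let `c` be non-decreasing with `c 0 = 1` and let `a` be
quaternionic coefficients with `Σ c_k|a_k|² < ∞` (so `f = Σ q^k a_k ∈ HS_c`).
With `α_k := −2(k+1)(k+2) a_{k+2}` (the coefficients of `τ(f)`, where the Fueter map
satisfies `τ(q^k) = −2(k−1)k Q_{k−2}`) and `b_k := c_{k+2}/((k+1)²(k+2)²)`, one has
`Σ b_k|α_k|² = 4(Σ c_k|a_k|² − |a_0|² − c_1|a_1|²)`, i.e.
`‖τ(f)‖²_{HM_b} = 4(‖f‖²_{HS_c} − |f(0)|² − c_1|f'(0)|²)`. -/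
theorem stmt_19 (c : ℕ → ℝ) (hc : Monotone c) (hc0 : c 0 = 1)
    (a : ℕ → ℍ[ℝ]) (ha : Summable fun k : ℕ => c k * ‖a k‖ ^ 2)
    (α : ℕ → ℍ[ℝ])
    (hα : ∀ k : ℕ, α k = (-2 * ((k : ℝ) + 1) * ((k : ℝ) + 2)) • a (k + 2))
    (b : ℕ → ℝ)
    (hb : ∀ k : ℕ, b k = c (k + 2) / (((k : ℝ) + 1) ^ 2 * ((k : ℝ) + 2) ^ 2)) :
    ∑' k : ℕ, b k * ‖α k‖ ^ 2
      = 4 * ((∑' k : ℕ, c k * ‖a k‖ ^ 2) - ‖a 0‖ ^ 2 - c 1 * ‖a 1‖ ^ 2) := by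
  have key : ∀ k : ℕ, b k * ‖α k‖ ^ 2 = 4 * (c (k + 2) * ‖a (k + 2)‖ ^ 2) := by
    intro k
    have h1 : ((k : ℝ) + 1) ≠ 0 := by positivity
    have h2 : ((k : ℝ) + 2) ≠ 0 := by positivity
    rw [hb k, hα k, norm_smul]
    rw [Real.norm_eq_abs]
    rw [mul_pow]
    have : |(-2 * ((k : ℝ) + 1) * ((k : ℝ) + 2))| ^ 2
        = 4 * (((k : ℝ) + 1) ^ 2 * ((k : ℝ) + 2) ^ 2) := by
      rw [sq_abs]; ring
    rw [this]
    field_simp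
  rw [tsum_congr key]
  have hsum2 : Summable fun k : ℕ => c (k + 2) * ‖a (k + 2)‖ ^ 2 :=
    ((summable_nat_add_iff 2).mpr ha)
  rw [tsum_mul_left]
  have := Summable.sum_add_tsum_nat_add (f := fun k : ℕ => c k * ‖a k‖ ^ 2) 2 ha
  have hshift : (∑' k : ℕ, c (k + 2) * ‖a (k + 2)‖ ^ 2)
      = (∑' k : ℕ, c k * ‖a k‖ ^ 2) - ‖a 0‖ ^ 2 - c 1 * ‖a 1‖ ^ 2 := by
    have hfin : ∑ i ∈ Finset.range 2, c i * ‖a i‖ ^ 2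
        = ‖a 0‖ ^ 2 + c 1 * ‖a 1‖ ^ 2 := by
      simp [Finset.sum_range_succ, hc0]
    linarith [this]
  rw [hshift]
end
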